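/- Second-order spatial expansion of the relative channel-gain variation (Lemma 1): assume R ≠ L, R ≠ U, cosθ ≠ 0, cosφ ≠ 0, and h(R) ≠ 0. Let w = (m/(d1·cosθ)) • N1 + (1/(d2·cosφ)) • N2 − (m/d1 + 2/(d1+d2)) • L̂R − (1/d2 + 2/(d1+d2)) • ÛR and let B denote the continuous bilinear map (1/h(R)) · (the second Fréchet derivative of h at R). Then the spatial relative growth ξ_s(Δ) := (h(R + Δ) − h(R))/h(R) satisfies ξ_s(Δ) − ⟪w, Δ⟫ − (1/2)·B(Δ, Δ) = o(‖Δ‖²) as Δ → 0 (in the Asymptotics.IsLittleO sense). -/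

import Mathlib

/-!
Away from `L` and `U` the gain `h` is smooth, so it has a second-order Taylor expansion with
Peano remainder at `R`; dividing by `h R` turns it into the claimed expansion of `ξ_s` once
`fderiv h R = h R • ⟪w, ·⟫`. That identity is the product rule for logarithmic derivatives:
`h` is a product of powers of `⟪N1, · - L⟫`, `⟪N2, · - U⟫`, `‖· - L‖`, `‖· - U‖` and
`‖· - L‖ + ‖· - U‖`, and `w` collects their logarithmic gradients.
-/

open scoped RealInnerProductSpace Topology

section Taylor

variable {E F : Type*} [NormedAddCommGroup E] [NormedSpace ℝ E]
  [NormedAddCommGroup F] [NormedSpace ℝ F]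

theorem ContinuousLinearMap.hasFDerivAt_half_apply_self_sub {B : E →L[ℝ] E →L[ℝ] F}
    (hB : ∀ u v, B u v = B v u) (x y : E) :
    HasFDerivAt (fun z => (1 / 2 : ℝ) • B (z - x) (z - x)) (B (y - x)) y := by
  have hsub : HasFDerivAt (fun z => z - x) (ContinuousLinearMap.id ℝ E) y :=
    (hasFDerivAt_id y).sub_const x
  refine ((B.hasFDerivAt_of_bilinear hsub hsub).const_smul (1 / 2 : ℝ)).congr_fderiv ?_
  ext u
  simp only [one_div, precompR_apply, map_sub, sub_apply, compL_apply, comp_id, smul_add,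
    add_apply, smul_apply, precompL_apply, id_apply, hB u]
  module

/-- The remainder has derivative `o(‖y - x‖)` near `x`, so the mean value inequality makes it
`o(‖y - x‖²)`. -/
theorem ContDiffAt.isLittleO_taylor_two {f : E → F} {x : E} (hf : ContDiffAt ℝ 2 f x) :
    (fun v => f (x + v) - f x - fderiv ℝ f x v - (1 / 2 : ℝ) • fderiv ℝ (fderiv ℝ f) x v v)
      =o[𝓝 0] fun v => ‖v‖ ^ 2 := by
  set f'' := fderiv ℝ (fderiv ℝ f) x
  have hsymm : ∀ u v, f'' u v = f'' v u :=
    (hf.isSymmSndFDerivAt (by simp [minSmoothness_of_isRCLikeNormedField])).eq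
  have hf'' : HasFDerivAt (fderiv ℝ f) f'' x :=
    ((hf.fderiv_right (m := 1) le_rfl).differentiableAt one_ne_zero).hasFDerivAt
  obtain ⟨δ, hδ, hball⟩ := Metric.eventually_nhds_iff_ball.1
    ((hf.eventually (by simp)).mono fun y hy => hy.differentiableAt two_ne_zero)
  set g : E → F := fun y => f y - fderiv ℝ f x (y - x) - (1 / 2 : ℝ) • f'' (y - x) (y - x)
  have hg : ∀ y ∈ Metric.ball x δ, HasFDerivWithinAt g
      (fderiv ℝ f y - fderiv ℝ f x - f'' (y - x)) (Metric.ball x δ) y := fun y hy =>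
    (((hball y hy).hasFDerivAt.sub ((hasFDerivAt_comp_sub x).2 (fderiv ℝ f x).hasFDerivAt)).sub
      (f''.hasFDerivAt_half_apply_self_sub hsymm x y)).hasFDerivWithinAt
  have hg' : (fun y => fderiv ℝ f y - fderiv ℝ f x - f'' (y - x))
      =o[𝓝[Metric.ball x δ] x] fun y => ‖y - x‖ ^ 1 := by
    simpa using (hf''.isLittleO.norm_right).mono nhdsWithin_le_nhds
  have hsmall := (convex_ball x δ).isLittleO_pow_succ (Metric.mem_ball_self hδ) hg hg'
  rw [(Metric.isOpen_ball).nhdsWithin_eq (Metric.mem_ball_self hδ)] at hsmall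
  have hshift : Filter.Tendsto (fun v => x + v) (𝓝 0) (𝓝 x) := by
    simpa using (continuous_const_add x).tendsto 0
  have hcomp := hsmall.comp_tendsto hshift
  simp only [Function.comp_def, add_sub_cancel_left] at hcomp
  refine hcomp.congr_left fun v => ?_
  simp only [g, add_sub_cancel_left, sub_self, map_zero, smul_zero, sub_zero]
  abel

end Taylor

section LogDeriv

variable {E : Type*} [NormedAddCommGroup E] [NormedSpace ℝ E] {f g : E → ℝ}
  {φ ψ : E →L[ℝ] ℝ} {x : E}

/-- `φ` is the derivative of `log |f|` at `x` when `f x ≠ 0`, phrased without logarithms. -/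
def HasLogFDerivAt (f : E → ℝ) (φ : E →L[ℝ] ℝ) (x : E) : Prop :=
  HasFDerivAt f (f x • φ) x

theorem HasFDerivAt.hasLogFDerivAt {f' : E →L[ℝ] ℝ} (hf : HasFDerivAt f f' x) (h0 : f x ≠ 0) :
    HasLogFDerivAt f ((f x)⁻¹ • f') x := by
  rwa [HasLogFDerivAt, smul_inv_smul₀ h0]

theorem HasLogFDerivAt.mul (hf : HasLogFDerivAt f φ x) (hg : HasLogFDerivAt g ψ x) :
    HasLogFDerivAt (fun y => f y * g y) (φ + ψ) x := by
  refine (HasFDerivAt.mul hf hg).congr_fderiv ?_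
  module

theorem HasLogFDerivAt.pow (hf : HasLogFDerivAt f φ x) (n : ℕ) :
    HasLogFDerivAt (fun y => f y ^ n) ((n : ℝ) • φ) x := by
  refine (HasFDerivAt.pow hf n).congr_fderiv ?_
  rcases n with _ | n
  · simp
  · simp only [nsmul_eq_mul, smul_smul, Nat.add_sub_cancel, pow_succ]
    push_cast
    ring_nf

theorem HasLogFDerivAt.inv (hf : HasLogFDerivAt f φ x) (h0 : f x ≠ 0) :
    HasLogFDerivAt (fun y => (f y)⁻¹) (-φ) x := by
  refine ((hasDerivAt_inv h0).comp_hasFDerivAt x hf).congr_fderiv ?_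
  match_scalars
  field_simp

theorem HasLogFDerivAt.div (hf : HasLogFDerivAt f φ x) (hg : HasLogFDerivAt g ψ x)
    (h0 : g x ≠ 0) : HasLogFDerivAt (fun y => f y / g y) (φ - ψ) x := by
  simpa only [div_eq_mul_inv, sub_eq_add_neg] using hf.mul (hg.inv h0)

end LogDeriv

section Gain

variable {E : Type*} [NormedAddCommGroup E] [InnerProductSpace ℝ E]

noncomputable def lambertianGain (L U N1 N2 : E) (m : ℕ) (R : E) : ℝ :=
  (⟪N1, R - L⟫ / ‖R - L‖) ^ m * (⟪N2, R - U⟫ / ‖R - U‖) / (‖R - L‖ + ‖R - U‖) ^ 2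

theorem contDiffAt_lambertianGain {L U N1 N2 R : E} (m : ℕ) {n : WithTop ℕ∞}
    (hRL : R ≠ L) (hRU : R ≠ U) : ContDiffAt ℝ n (lambertianGain L U N1 N2 m) R := by
  have hL : R - L ≠ 0 := sub_ne_zero.2 hRL
  have hU : R - U ≠ 0 := sub_ne_zero.2 hRU
  have hsubL : ContDiffAt ℝ n (fun x : E => x - L) R := contDiffAt_id.sub contDiffAt_const
  have hsubU : ContDiffAt ℝ n (fun x : E => x - U) R := contDiffAt_id.sub contDiffAt_const
  have hnL := hsubL.norm ℝ hL
  have hnU := hsubU.norm ℝ hU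
  exact ((((contDiffAt_const.inner ℝ hsubL).div hnL (norm_ne_zero_iff.2 hL)).pow m).mul
    ((contDiffAt_const.inner ℝ hsubU).div hnU (norm_ne_zero_iff.2 hU))).div
    ((hnL.add hnU).pow 2) (by positivity)

theorem hasFDerivAt_norm_sub {c x : E} (hx : x ≠ c) :
    HasFDerivAt (fun y => ‖y - c‖) (innerSL ℝ (‖x - c‖⁻¹ • (x - c))) x := by
  have hpos : 0 < ‖x - c‖ := norm_pos_iff.2 (sub_ne_zero.2 hx)
  have hsqrt := (Real.hasDerivAt_sqrt (by positivity)).comp_hasFDerivAt x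
    ((hasFDerivAt_id x).sub_const c).norm_sq
  simp only [Function.comp_def, Real.sqrt_sq (norm_nonneg _)] at hsqrt
  refine hsqrt.congr_fderiv ?_
  ext v
  simp only [id_eq, one_div, mul_inv_rev, map_sub, ContinuousLinearMap.comp_id, smul_apply,
    sub_apply, coe_innerSL_apply, nsmul_eq_mul, Nat.cast_ofNat, smul_eq_mul, map_smul]
  field_simp

theorem hasLogFDerivAt_inner_sub {N c x : E} (h : ⟪N, x - c⟫ ≠ 0) :
    HasLogFDerivAt (fun y => ⟪N, y - c⟫) (innerSL ℝ (⟪N, x - c⟫⁻¹ • N)) x := by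
  have hd : HasFDerivAt (fun y => ⟪N, y - c⟫) (innerSL ℝ N) x :=
    (hasFDerivAt_comp_sub c).2 (innerSL ℝ N).hasFDerivAt
  simpa [map_smulₛₗ] using hd.hasLogFDerivAt h

theorem hasLogFDerivAt_lambertianGain {L U N1 N2 R : E} (m : ℕ) (hRL : R ≠ L) (hRU : R ≠ U)
    (h1 : ⟪N1, R - L⟫ ≠ 0) (h2 : ⟪N2, R - U⟫ ≠ 0) :
    HasLogFDerivAt (lambertianGain L U N1 N2 m)
      (innerSL ℝ ((m / ⟪N1, R - L⟫) • N1 + (1 / ⟪N2, R - U⟫) • N2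
        - (m / ‖R - L‖ + 2 / (‖R - L‖ + ‖R - U‖)) • (‖R - L‖⁻¹ • (R - L))
        - (1 / ‖R - U‖ + 2 / (‖R - L‖ + ‖R - U‖)) • (‖R - U‖⁻¹ • (R - U)))) R := by
  have hdL : 0 < ‖R - L‖ := norm_pos_iff.2 (sub_ne_zero.2 hRL)
  have hdU : 0 < ‖R - U‖ := norm_pos_iff.2 (sub_ne_zero.2 hRU)
  have hnL := (hasFDerivAt_norm_sub hRL).hasLogFDerivAt hdL.ne'
  have hnU := (hasFDerivAt_norm_sub hRU).hasLogFDerivAt hdU.ne'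
  have hsum : HasLogFDerivAt (fun y => ‖y - L‖ + ‖y - U‖) _ R :=
    ((hasFDerivAt_norm_sub hRL).add (hasFDerivAt_norm_sub hRU)).hasLogFDerivAt (add_pos hdL hdU).ne'
  have hgain := ((((hasLogFDerivAt_inner_sub h1).div hnL hdL.ne').pow m).mul
    ((hasLogFDerivAt_inner_sub h2).div hnU hdU.ne')).div (hsum.pow 2) (by positivity)
  convert hgain using 2
  · rfl
  · ext v
    simp only [one_div, map_sub, map_add, map_smul, sub_apply, add_apply, smul_apply,
      coe_innerSL_apply, smul_eq_mul, Nat.cast_ofNat, Pi.add_apply, smul_add]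
    field_simp
    ring

end Gain

theorem lambertian_gain_second_order_spatial_general
    (L U N1 N2 : EuclideanSpace ℝ (Fin 3))
    (m : ℕ)
    (h : EuclideanSpace ℝ (Fin 3) → ℝ)
    (hdef : ∀ R, h R =
      (⟪N1, R - L⟫ / ‖R - L‖) ^ m * (⟪N2, R - U⟫ / ‖R - U‖) / (‖R - L‖ + ‖R - U‖) ^ 2)
    (R : EuclideanSpace ℝ (Fin 3)) (hRL : R ≠ L) (hRU : R ≠ U)
    (d1 d2 : ℝ) (hd1 : d1 = ‖R - L‖) (hd2 : d2 = ‖R - U‖)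
    (LR UR : EuclideanSpace ℝ (Fin 3)) (hLR : LR = (1 / d1) • (R - L)) (hUR : UR = (1 / d2) • (R - U))
    (cosθ cosφ : ℝ) (hcosθ : cosθ = ⟪N1, LR⟫) (hcosφ : cosφ = ⟪N2, UR⟫)
    (hθ : cosθ ≠ 0) (hφ : cosφ ≠ 0) (hhR : h R ≠ 0)
    (w : EuclideanSpace ℝ (Fin 3))
    (hw : w = ((m : ℝ) / (d1 * cosθ)) • N1 + (1 / (d2 * cosφ)) • N2
        - ((m : ℝ) / d1 + 2 / (d1 + d2)) • LR
        - (1 / d2 + 2 / (d1 + d2)) • UR)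
    (B : EuclideanSpace ℝ (Fin 3) → EuclideanSpace ℝ (Fin 3) → ℝ)
    (hB : ∀ Δ₁ Δ₂, B Δ₁ Δ₂ = (1 / h R) * fderiv ℝ (fderiv ℝ h) R Δ₁ Δ₂)
    (ξs : EuclideanSpace ℝ (Fin 3) → ℝ)
    (hξs : ∀ Δ, ξs Δ = (h (R + Δ) - h R) / h R) :
    (fun Δ => ξs Δ - ⟪w, Δ⟫ - (1 / 2) * B Δ Δ) =o[𝓝 0] (fun Δ => ‖Δ‖ ^ 2) := by
  have hgain : h = lambertianGain L U N1 N2 m := funext hdef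
  have hd1ne : d1 ≠ 0 := hd1 ▸ norm_ne_zero_iff.2 (sub_ne_zero.2 hRL)
  have hd2ne : d2 ≠ 0 := hd2 ▸ norm_ne_zero_iff.2 (sub_ne_zero.2 hRU)
  have hin1 : ⟪N1, R - L⟫ = d1 * cosθ := by
    rw [hcosθ, hLR, real_inner_smul_right]; field_simp
  have hin2 : ⟪N2, R - U⟫ = d2 * cosφ := by
    rw [hcosφ, hUR, real_inner_smul_right]; field_simp
  have hgrad : ∀ Δ, fderiv ℝ h R Δ = h R * ⟪w, Δ⟫ := by
    have hlog := hasLogFDerivAt_lambertianGain m hRL hRU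
      (hin1 ▸ mul_ne_zero hd1ne hθ) (hin2 ▸ mul_ne_zero hd2ne hφ)
    rw [← hgain, hin1, hin2, ← hd1, ← hd2, inv_eq_one_div, inv_eq_one_div, ← hLR, ← hUR, ← hw]
      at hlog
    simp [hlog.fderiv]
  refine ((hgain ▸ contDiffAt_lambertianGain m hRL hRU).isLittleO_taylor_two.const_mul_left
    (h R)⁻¹).congr_left fun Δ => ?_
  rw [hξs, hB, hgrad, smul_eq_mul]
  field_simp

/-- Second-order spatial expansion of the relative channel-gain variation (Lemma 1):
`ξ_s(Δ) = ⟪w, Δ⟫ + (1/2)·B(Δ,Δ) + o(‖Δ‖²)` as `Δ → 0`, where `w` is the stated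
gradient-coefficient vector and `B` is the normalized second Fréchet derivative of `h` at `R`. -/
theorem lambertian_gain_second_order_spatial
    (L U N1 N2 : EuclideanSpace ℝ (Fin 3))
    (hN1 : ‖N1‖ = 1) (hN2 : ‖N2‖ = 1)
    (m : ℕ) (hm : 1 ≤ m)
    (h : EuclideanSpace ℝ (Fin 3) → ℝ)
    (hdef : ∀ R, h R =
      (⟪N1, R - L⟫ / ‖R - L‖) ^ m * (⟪N2, R - U⟫ / ‖R - U‖) / (‖R - L‖ + ‖R - U‖) ^ 2)
    (R : EuclideanSpace ℝ (Fin 3)) (hRL : R ≠ L) (hRU : R ≠ U)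
    (d1 d2 : ℝ) (hd1 : d1 = ‖R - L‖) (hd2 : d2 = ‖R - U‖)
    (LR UR : EuclideanSpace ℝ (Fin 3)) (hLR : LR = (1 / d1) • (R - L)) (hUR : UR = (1 / d2) • (R - U))
    (cosθ cosφ : ℝ) (hcosθ : cosθ = ⟪N1, LR⟫) (hcosφ : cosφ = ⟪N2, UR⟫)
    (hθ : cosθ ≠ 0) (hφ : cosφ ≠ 0) (hhR : h R ≠ 0)
    (w : EuclideanSpace ℝ (Fin 3))
    (hw : w = ((m : ℝ) / (d1 * cosθ)) • N1 + (1 / (d2 * cosφ)) • N2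
        - ((m : ℝ) / d1 + 2 / (d1 + d2)) • LR
        - (1 / d2 + 2 / (d1 + d2)) • UR)
    (B : EuclideanSpace ℝ (Fin 3) → EuclideanSpace ℝ (Fin 3) → ℝ)
    (hB : ∀ Δ₁ Δ₂, B Δ₁ Δ₂ = (1 / h R) * fderiv ℝ (fderiv ℝ h) R Δ₁ Δ₂)
    (ξs : EuclideanSpace ℝ (Fin 3) → ℝ)
    (hξs : ∀ Δ, ξs Δ = (h (R + Δ) - h R) / h R) :
    (fun Δ => ξs Δ - ⟪w, Δ⟫ - (1 / 2) * B Δ Δ) =o[𝓝 0] (fun Δ => ‖Δ‖ ^ 2) :=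
  lambertian_gain_second_order_spatial_general L U N1 N2 m h hdef R hRL hRU d1 d2 hd1 hd2 LR UR hLR
    hUR cosθ cosφ hcosθ hcosφ hθ hφ hhR w hw B hB ξs hξs
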